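/- arXiv:1310.1348 — 2 statements merged into one kernel-verified Lean document; each statement's English description precedes it below -/
import Mathlib

section
/- Assume B is positive definite on S (hence on S'). Let α : H → ℝ be a linear functional, let ∇ψ ∈ S be the unique vector with B(∇ψ, Y) = α(Y) for all Y ∈ S, let ∇'ψ ∈ S' be the unique vector with B(∇'ψ, Y') = α(Y') for all Y' ∈ S', and let γ^♯ ∈ S be the unique vector with B(γ^♯, Y) = γ(Y) for all Y ∈ S, where γ : S → ℝ is the linear functional with X + γ(X)·L ∈ S' for X ∈ S. Then ∇'ψ = (∇ψ + α(L)·γ^♯) + (γ(∇ψ) + α(L)·B(γ^♯, γ^♯))·L. (This expresses the gradient of a function with respect to the second foliation in terms of the first: ∇'ψ = [∇ψ + γ^♯·Lψ] + [γ^♯·∇ψ + Lψ·(γ,γ)]·L.) -/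
/-- If `B` is positive definite on `S`, `∇ψ ∈ S` represents the functional `α` on `S`,
`∇'ψ ∈ S'` represents `α` on `S'`, and `γ^♯ ∈ S` represents `γ` on `S`, then
`∇'ψ = (∇ψ + α(L) • γ^♯) + (γ(∇ψ) + α(L) · B(γ^♯, γ^♯)) • L`. -/
theorem stmt_4 {V : Type*} [AddCommGroup V] [Module ℝ V] [FiniteDimensional ℝ V]
    (B : V →ₗ[ℝ] V →ₗ[ℝ] ℝ) (hBsymm : ∀ x y : V, B x y = B y x)
    (L : V) (hL : L ≠ 0)
    (H S S' : Submodule ℝ V)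
    (hLH : L ∈ H) (hBL : ∀ x ∈ H, B L x = 0)
    (hSH : S ≤ H) (hS'H : S' ≤ H)
    (hSdisj : S ⊓ Submodule.span ℝ {L} = ⊥)
    (hSsup : S ⊔ Submodule.span ℝ {L} = H)
    (hS'disj : S' ⊓ Submodule.span ℝ {L} = ⊥)
    (hS'sup : S' ⊔ Submodule.span ℝ {L} = H)
    (hpos : ∀ X ∈ S, X ≠ 0 → 0 < B X X)
    (γ : S →ₗ[ℝ] ℝ) (hγ : ∀ X : S, (X : V) + γ X • L ∈ S')
    (α : V →ₗ[ℝ] ℝ)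
    (gradψ : V) (hgradmem : gradψ ∈ S) (hgrad : ∀ Y ∈ S, B gradψ Y = α Y)
    (grad'ψ : V) (hgrad'mem : grad'ψ ∈ S') (hgrad' : ∀ Y' ∈ S', B grad'ψ Y' = α Y')
    (γs : V) (hγsmem : γs ∈ S) (hγs : ∀ Y : S, B γs (Y : V) = γ Y) :
    grad'ψ = (gradψ + α L • γs) + (γ ⟨gradψ, hgradmem⟩ + α L * B γs γs) • L := by
  -- every element of S' decomposes as x + γ(x)•L with x ∈ S
  have hdec : ∀ y' ∈ S', ∃ x : S, y' = (x : V) + γ x • L := by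
    intro y' hy'
    have hyH : y' ∈ H := hS'H hy'
    rw [← hSsup] at hyH
    obtain ⟨s, hs, t, ht, rfl⟩ := Submodule.mem_sup.mp hyH
    obtain ⟨c, rfl⟩ := Submodule.mem_span_singleton.mp ht
    refine ⟨⟨s, hs⟩, ?_⟩
    have heq : (s + c • L) - (s + γ ⟨s, hs⟩ • L) = (c - γ ⟨s, hs⟩) • L := by
      rw [sub_smul]; abel
    have hmem : (c - γ ⟨s, hs⟩) • L ∈ S' ⊓ Submodule.span ℝ {L} := by
      constructor
      · rw [← heq]; exact Submodule.sub_mem _ hy' (hγ ⟨s, hs⟩)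
      · exact Submodule.smul_mem _ _ (Submodule.mem_span_singleton_self L)
    rw [hS'disj, Submodule.mem_bot] at hmem
    rcases smul_eq_zero.mp hmem with h | h
    · rw [sub_eq_zero] at h; rw [h]
    · exact absurd h hL
  -- B x L = 0 for x ∈ H
  have hBL' : ∀ x ∈ H, B x L = 0 := fun x hx => (hBsymm x L).trans (hBL x hx)
  set W : V := (gradψ + α L • γs) + (γ ⟨gradψ, hgradmem⟩ + α L * B γs γs) • L with hW
  -- W ∈ S'
  have hγγs : γ ⟨γs, hγsmem⟩ = B γs γs := (hγs ⟨γs, hγsmem⟩).symm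
  have hWS' : W ∈ S' := by
    have := hγ (⟨gradψ, hgradmem⟩ + α L • ⟨γs, hγsmem⟩)
    simp only [map_add, map_smul, smul_eq_mul, hγγs, Submodule.coe_add,
      Submodule.coe_smul] at this
    exact this
  have hWH : W ∈ H := hS'H hWS'
  -- B W y' = α y' for all y' ∈ S'
  have hBW : ∀ y' ∈ S', B W y' = α y' := by
    intro y' hy'
    obtain ⟨x, rfl⟩ := hdec y' hy'
    have hxH : (x : V) ∈ H := hSH x.2
    have hWx : B W (x : V) = α x + α L * γ x := by
      simp only [hW, map_add, map_smul, LinearMap.add_apply, LinearMap.smul_apply,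
        smul_eq_mul]
      rw [hgrad x x.2, hγs x, hBL x hxH]
      ring
    simp only [map_add, map_smul, smul_eq_mul]
    rw [hBL' W hWH, hWx]
    ring
  -- difference
  set d : V := grad'ψ - W with hd
  have hdS' : d ∈ S' := Submodule.sub_mem _ hgrad'mem hWS'
  have hBd : ∀ y' ∈ S', B d y' = 0 := by
    intro y' hy'
    simp only [hd, map_sub, LinearMap.sub_apply]
    rw [hgrad' y' hy', hBW y' hy', sub_self]
  have hdH : d ∈ H := hS'H hdS'
  obtain ⟨x, hx⟩ := hdec d hdS'
  have hxH : (x : V) ∈ H := hSH x.2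
  have hBxx : B (x : V) (x : V) = 0 := by
    have h0 : B d d = 0 := hBd d hdS'
    rw [hx] at h0
    simp only [map_add, map_smul, LinearMap.add_apply, LinearMap.smul_apply,
      smul_eq_mul] at h0
    rw [hBL' x hxH, hBL x hxH, hBL' L hLH] at h0
    linarith
  have hx0 : (x : V) = 0 := by
    by_contra hne
    exact absurd hBxx (ne_of_gt (hpos x x.2 hne))
  have hxz : x = 0 := Subtype.ext hx0
  have : d = 0 := by rw [hx, hxz]; simp
  have := sub_eq_zero.mp this
  exact this
end

section
/- Let (E₁, …, E_k) be a B-orthonormal basis of S, let γ : S → ℝ be linear, let P ∈ S satisfy B(P, Y) = γ(Y) for all Y ∈ S, let Ω ∈ ℝ, and set Eᵢ' = Eᵢ + γ(Eᵢ)·L, L' = Ω²·L, and L̄' = ½·B(P,P)·L + L̄ + P. Then Σᵢ R(Eᵢ', L', Eᵢ', L̄') = Ω²·( ½·B(P,P)·Σᵢ R(Eᵢ, L, Eᵢ, L) − R(P, L, P, L) − R(P, L, L̄, L) + Σᵢ R(Eᵢ, L, Eᵢ, L̄) + Σᵢ R(Eᵢ, L, Eᵢ, P) ). (This is the transformation law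 tr'_{X',Y'}R'(X', L', Y', L̄') = ½(γ,γ)Ω²·tr α − Ω²·α(γ^♯,γ^♯) − Ω²·β(γ^♯) + Ω²·tr R(X,L,Y,L̄) + Ω²·tr R(X,L,Y,γ^♯) of the traced curvature component under change of foliation.) -/
/-!
Expanding `R(Eᵢ + γ(Eᵢ)L, Ω²L, Eᵢ + γ(Eᵢ)L, ½B(P,P)L + L̄ + P)` multilinearly, every term with
`L` in both slots of an antisymmetric pair vanishes. What survives besides the traces on the right
is `Ω² Σᵢ γ(Eᵢ) R(Eᵢ, L, L, ½B(P,P)L + L̄ + P)`, and since `P = Σᵢ γ(Eᵢ) Eᵢ` in the orthonormal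
basis this is `Ω² R(P, L, L, L̄ + P) = −Ω² (R(P,L,L̄,L) + R(P,L,P,L))`, as `R(P,L,L,L) = 0`.
-/

open Finset

theorem Module.Basis.coe_eq_sum_of_orthonormal {K V ι : Type*} [CommRing K] [AddCommGroup V]
    [Module K V] [Fintype ι] [DecidableEq ι] (B : V →ₗ[K] V →ₗ[K] K) {S : Submodule K V}
    (E : Module.Basis ι K S) (hE : ∀ i j, B (E i : V) (E j : V) = if i = j then 1 else 0)
    (p : S) : (p : V) = ∑ i, B p (E i : V) • (E i : V) := by
  have hrepr : ∀ x : S, (x : V) = ∑ i, E.repr x i • (E i : V) := fun x => by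
    conv_lhs => rw [← E.sum_repr x]
    simp only [Submodule.coe_sum, Submodule.coe_smul]
  have hcoeff : ∀ j, B p (E j : V) = E.repr p j := fun j => by
    rw [hrepr p]
    simp [hE]
  simp only [hcoeff, ← hrepr]

section Curvature

variable {V : Type*} [AddCommGroup V] [Module ℝ V] (R : V →ₗ[ℝ] V →ₗ[ℝ] V →ₗ[ℝ] V →ₗ[ℝ] ℝ)

theorem curvature_apply_self_left (hR1 : ∀ x y z w : V, R x y z w = -R y x z w) (x z w : V) :
    R x x z w = 0 := by
  linarith [hR1 x x z w]

theorem curvature_apply_self_right (hR2 : ∀ x y z w : V, R x y z w = -R x y w z) (x y z : V) :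
    R x y z z = 0 := by
  linarith [hR2 x y z z]

theorem curvature_sum_smul_left {ι : Type*} (s : Finset ι) (c : ι → ℝ) (X : ι → V) (y z w : V) :
    R (∑ i ∈ s, c i • X i) y z w = ∑ i ∈ s, c i * R (X i) y z w := by
  simp only [map_sum, map_smul, LinearMap.sum_apply, LinearMap.smul_apply, smul_eq_mul]

theorem curvature_add_smul_null (hR1 : ∀ x y z w : V, R x y z w = -R y x z w)
    (X L W : V) (c a : ℝ) :
    R (X + c • L) (a • L) (X + c • L) W = a * (R X L X W + c * R X L L W) := by
  simp only [map_add, map_smul, LinearMap.add_apply, LinearMap.smul_apply, smul_eq_mul,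
    curvature_apply_self_left R hR1]
  ring

end Curvature

theorem stmt_6_general {V : Type*} [AddCommGroup V] [Module ℝ V]
    (B : V →ₗ[ℝ] V →ₗ[ℝ] ℝ)
    (L Lb : V)
    (S : Submodule ℝ V)
    (R : V →ₗ[ℝ] V →ₗ[ℝ] V →ₗ[ℝ] V →ₗ[ℝ] ℝ)
    (hR1 : ∀ x y z w : V, R x y z w = -R y x z w)
    (hR2 : ∀ x y z w : V, R x y z w = -R x y w z)
    (k : ℕ) (E : Module.Basis (Fin k) ℝ S)
    (hE : ∀ i j, B (E i : V) (E j : V) = if i = j then 1 else 0)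
    (γ : S →ₗ[ℝ] ℝ) (P : V) (hPmem : P ∈ S)
    (hP : ∀ Y : S, B P (Y : V) = γ Y)
    (Ω : ℝ) :
    ∑ i, R ((E i : V) + γ (E i) • L) (Ω ^ 2 • L) ((E i : V) + γ (E i) • L)
        (((1 : ℝ) / 2 * B P P) • L + Lb + P)
      = Ω ^ 2 * ((1 : ℝ) / 2 * B P P * ∑ i, R (E i : V) L (E i : V) L
          - R P L P L - R P L Lb L
          + ∑ i, R (E i : V) L (E i : V) Lb
          + ∑ i, R (E i : V) L (E i : V) P) := by
  have hPsum : P = ∑ i, γ (E i) • (E i : V) := by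
    simpa only [hP] using E.coe_eq_sum_of_orthonormal B hE ⟨P, hPmem⟩
  have hcross : ∀ w : V, ∑ i, γ (E i) * R (E i : V) L L w = -R P L w L := fun w => by
    rw [← curvature_sum_smul_left, ← hPsum, hR2]
  simp only [curvature_add_smul_null R hR1, ← mul_sum, sum_add_distrib, hcross]
  simp only [map_add, map_smul, LinearMap.add_apply, LinearMap.smul_apply, smul_eq_mul,
    sum_add_distrib, ← mul_sum, curvature_apply_self_right R hR2]
  ring

/-- Transformation law of the traced curvature component under change of foliation:
with `Eᵢ' = Eᵢ + γ(Eᵢ) • L`, `L' = Ω² • L`, `L̄' = ½ B(P,P) • L + L̄ + P`, one has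
`Σᵢ R(Eᵢ', L', Eᵢ', L̄') = Ω² (½ B(P,P) Σᵢ R(Eᵢ,L,Eᵢ,L) − R(P,L,P,L) − R(P,L,L̄,L)
  + Σᵢ R(Eᵢ,L,Eᵢ,L̄) + Σᵢ R(Eᵢ,L,Eᵢ,P))`. -/
theorem stmt_6 {V : Type*} [AddCommGroup V] [Module ℝ V] [FiniteDimensional ℝ V]
    (B : V →ₗ[ℝ] V →ₗ[ℝ] ℝ) (hBsymm : ∀ x y : V, B x y = B y x)
    (L Lb : V)
    (hLL : B L L = 0) (hLbLb : B Lb Lb = 0) (hLLb : B L Lb = -1)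
    (S : Submodule ℝ V)
    (hSL : ∀ X ∈ S, B L X = 0) (hSLb : ∀ X ∈ S, B Lb X = 0)
    (hpos : ∀ X ∈ S, X ≠ 0 → 0 < B X X)
    (R : V →ₗ[ℝ] V →ₗ[ℝ] V →ₗ[ℝ] V →ₗ[ℝ] ℝ)
    (hR1 : ∀ x y z w : V, R x y z w = -R y x z w)
    (hR2 : ∀ x y z w : V, R x y z w = -R x y w z)
    (hR3 : ∀ x y z w : V, R x y z w = R z w x y)
    (k : ℕ) (E : Module.Basis (Fin k) ℝ S)
    (hE : ∀ i j, B (E i : V) (E j : V) = if i = j then 1 else 0)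
    (γ : S →ₗ[ℝ] ℝ) (P : V) (hPmem : P ∈ S)
    (hP : ∀ Y : S, B P (Y : V) = γ Y)
    (Ω : ℝ) :
    ∑ i, R ((E i : V) + γ (E i) • L) (Ω ^ 2 • L) ((E i : V) + γ (E i) • L)
        (((1 : ℝ) / 2 * B P P) • L + Lb + P)
      = Ω ^ 2 * ((1 : ℝ) / 2 * B P P * ∑ i, R (E i : V) L (E i : V) L
          - R P L P L - R P L Lb L
          + ∑ i, R (E i : V) L (E i : V) Lb
          + ∑ i, R (E i : V) L (E i : V) P) :=
  stmt_6_general B L Lb S R hR1 hR2 k E hE γ P hPmem hP Ω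
end
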